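/- Let a₁,…,aₙ be a sequence of positive integers of one of the following eleven types: (1) n=1 with a₁ ≥ 2; (2) n=2, (1,a) with a ≥ 2; (3) n=2, (a,1) with a ≥ 2; (4) n=3, (1,1,a) with a ≥ 2; (5) n=3, (a,1,1) with a ≥ 2; (6) n=4, (1,1,1,a) with a ≥ 2; (7) n=4, (1,a,1,1) with a ≥ 2; (8) n=4, (1,1,a,1) with a ≥ 2; (9) n=5, (1,1,a,1,1) with a ≥ 2; (10) n=5, (1,a,1,b,1) with a,b ≥ 2; (11) n=6, (1,1,a,1,b,1) with a,b ≥ 2. Then V(a₁,…,aₙ) ≤ T(n). -/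
import Mathlib


/-- The Kauffman–Lopes recurrence computing the determinant of the
2-bridge link `R(a₁, …, aₙ)`:  `T 0 = 1`, `T 1 = a 1`,
`T (k+1) = a (k+1) * T k + T (k-1)`. -/
def Trec (a : ℕ → ℕ) : ℕ → ℕ
  | 0 => 1
  | 1 => a 1
  | (n + 2) => a (n + 2) * Trec a (n + 1) + Trec a n

/-- `V(a₁, …, aₙ) = ∏_{i=1}^n (aᵢ + 2)/2`. -/
noncomputable def Vprod (a : ℕ → ℕ) (n : ℕ) : ℝ :=
  ∏ i ∈ Finset.Icc 1 n, ((a i : ℝ) + 2) / 2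

lemma Vprod_zero (a : ℕ → ℕ) : Vprod a 0 = 1 := by simp [Vprod]

lemma Vprod_succ (a : ℕ → ℕ) (n : ℕ) :
    Vprod a (n + 1) = Vprod a n * (((a (n + 1) : ℝ) + 2) / 2) := by
  unfold Vprod
  rw [← Finset.prod_Icc_succ_top (by omega : 1 ≤ n + 1)]

lemma Vprod_1 (a : ℕ → ℕ) : Vprod a 1 = Vprod a 0 * (((a 1 : ℝ) + 2) / 2) := Vprod_succ a 0
lemma Vprod_2 (a : ℕ → ℕ) : Vprod a 2 = Vprod a 1 * (((a 2 : ℝ) + 2) / 2) := Vprod_succ a 1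
lemma Vprod_3 (a : ℕ → ℕ) : Vprod a 3 = Vprod a 2 * (((a 3 : ℝ) + 2) / 2) := Vprod_succ a 2
lemma Vprod_4 (a : ℕ → ℕ) : Vprod a 4 = Vprod a 3 * (((a 4 : ℝ) + 2) / 2) := Vprod_succ a 3
lemma Vprod_5 (a : ℕ → ℕ) : Vprod a 5 = Vprod a 4 * (((a 5 : ℝ) + 2) / 2) := Vprod_succ a 4
lemma Vprod_6 (a : ℕ → ℕ) : Vprod a 6 = Vprod a 5 * (((a 6 : ℝ) + 2) / 2) := Vprod_succ a 5

lemma Trec_1 (a : ℕ → ℕ) : Trec a 1 = a 1 := rfl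
lemma Trec_2 (a : ℕ → ℕ) : Trec a 2 = a 2 * Trec a 1 + Trec a 0 := rfl
lemma Trec_0 (a : ℕ → ℕ) : Trec a 0 = 1 := rfl
lemma Trec_3 (a : ℕ → ℕ) : Trec a 3 = a 3 * Trec a 2 + Trec a 1 := rfl
lemma Trec_4 (a : ℕ → ℕ) : Trec a 4 = a 4 * Trec a 3 + Trec a 2 := rfl
lemma Trec_5 (a : ℕ → ℕ) : Trec a 5 = a 5 * Trec a 4 + Trec a 3 := rfl
lemma Trec_6 (a : ℕ → ℕ) : Trec a 6 = a 6 * Trec a 5 + Trec a 4 := rfl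

theorem eleven_types (a : ℕ → ℕ) (n : ℕ)
    (h : (n = 1 ∧ 2 ≤ a 1) ∨
      (n = 2 ∧ a 1 = 1 ∧ 2 ≤ a 2) ∨
      (n = 2 ∧ 2 ≤ a 1 ∧ a 2 = 1) ∨
      (n = 3 ∧ a 1 = 1 ∧ a 2 = 1 ∧ 2 ≤ a 3) ∨
      (n = 3 ∧ 2 ≤ a 1 ∧ a 2 = 1 ∧ a 3 = 1) ∨
      (n = 4 ∧ a 1 = 1 ∧ a 2 = 1 ∧ a 3 = 1 ∧ 2 ≤ a 4) ∨
      (n = 4 ∧ a 1 = 1 ∧ 2 ≤ a 2 ∧ a 3 = 1 ∧ a 4 = 1) ∨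
      (n = 4 ∧ a 1 = 1 ∧ a 2 = 1 ∧ 2 ≤ a 3 ∧ a 4 = 1) ∨
      (n = 5 ∧ a 1 = 1 ∧ a 2 = 1 ∧ 2 ≤ a 3 ∧ a 4 = 1 ∧ a 5 = 1) ∨
      (n = 5 ∧ a 1 = 1 ∧ 2 ≤ a 2 ∧ a 3 = 1 ∧ 2 ≤ a 4 ∧ a 5 = 1) ∨
      (n = 6 ∧ a 1 = 1 ∧ a 2 = 1 ∧ 2 ≤ a 3 ∧ a 4 = 1 ∧ 2 ≤ a 5 ∧ a 6 = 1)) :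
    Vprod a n ≤ (Trec a n : ℝ) := by
  rcases h with ⟨rfl, h1⟩ | ⟨rfl, e1, h2⟩ | ⟨rfl, h1, e2⟩ | ⟨rfl, e1, e2, h3⟩ | ⟨rfl, h1, e2, e3⟩ | ⟨rfl, e1, e2, e3, h4⟩ | ⟨rfl, e1, h2, e3, e4⟩ | ⟨rfl, e1, e2, h3, e4⟩ | ⟨rfl, e1, e2, h3, e4, e5⟩ | ⟨rfl, e1, h2, e3, h4, e5⟩ | ⟨rfl, e1, e2, h3, e4, h5, e6⟩
  · simp only [Vprod_6, Vprod_5, Vprod_4, Vprod_3, Vprod_2, Vprod_1, Vprod_zero,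
        Trec_6, Trec_5, Trec_4, Trec_3, Trec_2, Trec_1, Trec_0]
    have c1 : (2:ℝ) ≤ (a 1 : ℝ) := by exact_mod_cast h1
    push_cast
    nlinarith [c1, sq_nonneg ((a 1:ℝ) - 2)]
  · simp only [Vprod_6, Vprod_5, Vprod_4, Vprod_3, Vprod_2, Vprod_1, Vprod_zero,
        Trec_6, Trec_5, Trec_4, Trec_3, Trec_2, Trec_1, Trec_0]
    rw [e1]
    have c2 : (2:ℝ) ≤ (a 2 : ℝ) := by exact_mod_cast h2
    push_cast
    nlinarith [c2, sq_nonneg ((a 2:ℝ) - 2)]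
  · simp only [Vprod_6, Vprod_5, Vprod_4, Vprod_3, Vprod_2, Vprod_1, Vprod_zero,
        Trec_6, Trec_5, Trec_4, Trec_3, Trec_2, Trec_1, Trec_0]
    rw [e2]
    have c1 : (2:ℝ) ≤ (a 1 : ℝ) := by exact_mod_cast h1
    push_cast
    nlinarith [c1, sq_nonneg ((a 1:ℝ) - 2)]
  · simp only [Vprod_6, Vprod_5, Vprod_4, Vprod_3, Vprod_2, Vprod_1, Vprod_zero,
        Trec_6, Trec_5, Trec_4, Trec_3, Trec_2, Trec_1, Trec_0]
    rw [e1]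
    rw [e2]
    have c3 : (2:ℝ) ≤ (a 3 : ℝ) := by exact_mod_cast h3
    push_cast
    nlinarith [c3, sq_nonneg ((a 3:ℝ) - 2)]
  · simp only [Vprod_6, Vprod_5, Vprod_4, Vprod_3, Vprod_2, Vprod_1, Vprod_zero,
        Trec_6, Trec_5, Trec_4, Trec_3, Trec_2, Trec_1, Trec_0]
    rw [e2]
    rw [e3]
    have c1 : (2:ℝ) ≤ (a 1 : ℝ) := by exact_mod_cast h1
    push_cast
    nlinarith [c1, sq_nonneg ((a 1:ℝ) - 2)]
  · simp only [Vprod_6, Vprod_5, Vprod_4, Vprod_3, Vprod_2, Vprod_1, Vprod_zero,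
        Trec_6, Trec_5, Trec_4, Trec_3, Trec_2, Trec_1, Trec_0]
    rw [e1]
    rw [e2]
    rw [e3]
    have c4 : (2:ℝ) ≤ (a 4 : ℝ) := by exact_mod_cast h4
    push_cast
    nlinarith [c4, sq_nonneg ((a 4:ℝ) - 2)]
  · simp only [Vprod_6, Vprod_5, Vprod_4, Vprod_3, Vprod_2, Vprod_1, Vprod_zero,
        Trec_6, Trec_5, Trec_4, Trec_3, Trec_2, Trec_1, Trec_0]
    rw [e1]
    rw [e3]
    rw [e4]
    have c2 : (2:ℝ) ≤ (a 2 : ℝ) := by exact_mod_cast h2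
    push_cast
    nlinarith [c2, sq_nonneg ((a 2:ℝ) - 2)]
  · simp only [Vprod_6, Vprod_5, Vprod_4, Vprod_3, Vprod_2, Vprod_1, Vprod_zero,
        Trec_6, Trec_5, Trec_4, Trec_3, Trec_2, Trec_1, Trec_0]
    rw [e1]
    rw [e2]
    rw [e4]
    have c3 : (2:ℝ) ≤ (a 3 : ℝ) := by exact_mod_cast h3
    push_cast
    nlinarith [c3, sq_nonneg ((a 3:ℝ) - 2)]
  · simp only [Vprod_6, Vprod_5, Vprod_4, Vprod_3, Vprod_2, Vprod_1, Vprod_zero,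
        Trec_6, Trec_5, Trec_4, Trec_3, Trec_2, Trec_1, Trec_0]
    rw [e1]
    rw [e2]
    rw [e4]
    rw [e5]
    have c3 : (2:ℝ) ≤ (a 3 : ℝ) := by exact_mod_cast h3
    push_cast
    nlinarith [c3, sq_nonneg ((a 3:ℝ) - 2)]
  · simp only [Vprod_6, Vprod_5, Vprod_4, Vprod_3, Vprod_2, Vprod_1, Vprod_zero,
        Trec_6, Trec_5, Trec_4, Trec_3, Trec_2, Trec_1, Trec_0]
    rw [e1]
    rw [e3]
    rw [e5]
    have c2 : (2:ℝ) ≤ (a 2 : ℝ) := by exact_mod_cast h2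
    have c4 : (2:ℝ) ≤ (a 4 : ℝ) := by exact_mod_cast h4
    push_cast
    nlinarith [c2, c4, mul_nonneg (sub_nonneg.2 c2) (sub_nonneg.2 c4)]
  · simp only [Vprod_6, Vprod_5, Vprod_4, Vprod_3, Vprod_2, Vprod_1, Vprod_zero,
        Trec_6, Trec_5, Trec_4, Trec_3, Trec_2, Trec_1, Trec_0]
    rw [e1]
    rw [e2]
    rw [e4]
    rw [e6]
    have c3 : (2:ℝ) ≤ (a 3 : ℝ) := by exact_mod_cast h3
    have c5 : (2:ℝ) ≤ (a 5 : ℝ) := by exact_mod_cast h5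
    push_cast
    nlinarith [c3, c5, mul_nonneg (sub_nonneg.2 c3) (sub_nonneg.2 c5)]
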